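/- arXiv:1807.08539 — 3 statements merged into one kernel-verified Lean document; each statement's English description precedes it below -/
import Mathlib

section
/- For 3 ≤ i < n, in the group algebra C[A_n] the elements t_i = (1,2)(i,i+1) and the Jucys–Murphy elements Y_i = (1,2)X_i satisfy the relation t_i·Y_i = Y_{i+1}·t_i − 1. -/
/-- The group algebra ℂ[S] of the group of permutations of ℕ (containing every ℂ[S_n]
and ℂ[A_n]). -/
abbrev GA := MonoidAlgebra ℂ (Equiv.Perm ℕ)

/-- The Jucys–Murphy element X_m = Σ_{1 ≤ j < m} (j,m) of the symmetric group. -/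
noncomputable def X (m : ℕ) : GA :=
  ∑ j ∈ Finset.Ico 1 m, MonoidAlgebra.single (Equiv.swap j m) 1

/-- The Jucys–Murphy element Y_i = (1,2)·X_i for the alternating group (valid for i ≥ 3). -/
noncomputable def Y (i : ℕ) : GA := MonoidAlgebra.single (Equiv.swap 1 2) 1 * X i

/-- The generator t_i = (1,2)(i,i+1) of A_n, as a group algebra element. -/
noncomputable def t (i : ℕ) : GA :=
  MonoidAlgebra.single (Equiv.swap 1 2 * Equiv.swap i (i + 1)) 1

set_option maxHeartbeats 4000000 in
theorem stmt7 (n i : ℕ) (hi : 3 ≤ i) (hin : i < n) :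
    t i * Y i = Y (i + 1) * t i - 1 := by
  -- Abbreviations
  have keyL : ∀ j ∈ Finset.Ico 1 i,
      (Equiv.swap 1 2 * Equiv.swap i (i+1)) * (Equiv.swap 1 2 * Equiv.swap j i)
        = Equiv.swap j (i+1) * Equiv.swap i (i+1) := by
    intro j hj
    rw [Finset.mem_Ico] at hj
    ext x
    simp only [Equiv.Perm.mul_apply, Equiv.swap_apply_def]
    split_ifs <;> omega
  have keyTop :
      Equiv.swap 1 2 * Equiv.swap i (i+1) * (Equiv.swap 1 2 * Equiv.swap i (i+1))
        = 1 := by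
    ext x
    simp only [Equiv.Perm.mul_apply, Equiv.swap_apply_def, Equiv.Perm.one_apply]
    split_ifs <;> omega
  -- expand LHS
  have hL : t i * Y i =
      ∑ j ∈ Finset.Ico 1 i,
        MonoidAlgebra.single (Equiv.swap j (i+1) * Equiv.swap i (i+1)) (1 : ℂ) := by
    rw [t, Y, X, ← mul_assoc, Finset.mul_sum]
    refine Finset.sum_congr rfl fun j hj => ?_
    rw [MonoidAlgebra.single_mul_single, MonoidAlgebra.single_mul_single, one_mul, one_mul,
      mul_assoc, keyL j hj]
  -- expand RHS
  have hR : Y (i+1) * t i =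
      (∑ j ∈ Finset.Ico 1 i,
        MonoidAlgebra.single
          (Equiv.swap 1 2 * Equiv.swap j (i+1) * (Equiv.swap 1 2 * Equiv.swap i (i+1)))
          (1 : ℂ)) + 1 := by
    rw [Y, X, t, Finset.mul_sum, Finset.sum_mul, Finset.sum_Ico_succ_top (by omega : 1 ≤ i)]
    congr 1
    · refine Finset.sum_congr rfl fun k hk => ?_
      rw [MonoidAlgebra.single_mul_single, MonoidAlgebra.single_mul_single, one_mul, one_mul]
    · rw [MonoidAlgebra.single_mul_single, MonoidAlgebra.single_mul_single, one_mul, one_mul,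
        mul_assoc, ← mul_assoc (Equiv.swap 1 2) (Equiv.swap i (i+1)), keyTop,
        MonoidAlgebra.one_def]
  rw [hL, hR, add_sub_cancel_right]
  -- reindex RHS sum by the involution swap 1 2
  have hmem : ∀ j : ℕ, j ∈ Finset.Ico 1 i ↔ Equiv.swap 1 2 j ∈ Finset.Ico 1 i := by
    intro j
    simp only [Finset.mem_Ico, Equiv.swap_apply_def]
    split_ifs <;> omega
  rw [eq_comm]
  refine Finset.sum_equiv (Equiv.swap 1 2) hmem fun j hj => ?_
  congr 1
  rw [Finset.mem_Ico] at hj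
  ext x
  simp only [Equiv.Perm.mul_apply, Equiv.swap_apply_def]
  split_ifs <;> omega
end

section
/- For a partition λ = (λ_1,...,λ_r) of n and any m with λ_1 = n − m, the number of standard Young tableaux of shape λ satisfies f^λ ≤ C(n, λ_1)·f^μ for some partition μ of m with largest part at most λ_1; consequently Σ_{λ⊢n, λ_1 = n−m} (f^λ)² ≤ C(n,m)²·m!. -/
/-- A standard Young tableau of shape μ: a filling of the cells of μ with the numbers
1,…,|μ| (each used once), strictly increasing along rows and columns, and 0 outside μ. -/
structure SYT (μ : YoungDiagram) where
  entry : ℕ → ℕ → ℕ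
  pos : ∀ i j, (i, j) ∈ μ → 1 ≤ entry i j ∧ entry i j ≤ μ.cells.card
  inj : ∀ i j i2 j2, (i, j) ∈ μ → (i2, j2) ∈ μ → entry i j = entry i2 j2 → (i, j) = (i2, j2)
  row_lt : ∀ i j j2, (i, j2) ∈ μ → j < j2 → entry i j < entry i j2
  col_lt : ∀ i i2 j, (i2, j) ∈ μ → i < i2 → entry i j < entry i2 j
  zero : ∀ i j, (i, j) ∉ μ → entry i j = 0

namespace SYTaux

open Finset

theorem SYT.ext' {μ : YoungDiagram} {T₁ T₂ : SYT μ} (h : T₁.entry = T₂.entry) : T₁ = T₂ := by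
  cases T₁; cases T₂; simpa using h

theorem syt_ext_on_cells {μ : YoungDiagram} {T₁ T₂ : SYT μ}
    (h : ∀ i j, (i, j) ∈ μ → T₁.entry i j = T₂.entry i j) : T₁ = T₂ := by
  apply SYT.ext'
  funext i j
  by_cases hc : (i, j) ∈ μ
  · exact h i j hc
  · rw [T₁.zero i j hc, T₂.zero i j hc]

instance sytFinite (μ : YoungDiagram) : Finite (SYT μ) := by
  let f : SYT μ → (μ.cells → Fin (μ.cells.card + 1)) := fun T c =>
    ⟨T.entry c.1.1 c.1.2, Nat.lt_succ_of_le (T.pos c.1.1 c.1.2 c.2).2⟩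
  have hf : Function.Injective f := by
    intro T₁ T₂ h
    apply syt_ext_on_cells
    intro i j hc
    have := congrFun h ⟨(i, j), hc⟩
    simpa [f] using this
  exact Finite.of_injective f hf

/-- strict monotonicity wrt the product order -/
theorem entry_lt_entry {μ : YoungDiagram} (T : SYT μ) {a b c d : ℕ}
    (hcd : (c, d) ∈ μ) (hac : a ≤ c) (hbd : b ≤ d) (hne : (a, b) ≠ (c, d)) :
    T.entry a b < T.entry c d := by
  rcases eq_or_lt_of_le hac with rfl | hac'
  · rcases eq_or_lt_of_le hbd with rfl | hbd'
    · exact absurd rfl hne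
    · exact T.row_lt a b d hcd hbd'
  · rcases eq_or_lt_of_le hbd with rfl | hbd'
    · exact T.col_lt a c b hcd hac'
    · have had : (a, d) ∈ μ := μ.up_left_mem (le_of_lt hac') le_rfl hcd
      exact lt_trans (T.row_lt a b d had hbd') (T.col_lt a c d hcd hac')

/-- the entries of an SYT are exactly 1..card -/
theorem entry_surj {μ : YoungDiagram} (T : SYT μ) {v : ℕ}
    (hv : v ∈ Finset.Icc 1 μ.cells.card) : ∃ c ∈ μ.cells, T.entry c.1 c.2 = v := by
  have himg : μ.cells.image (fun c => T.entry c.1 c.2) = Finset.Icc 1 μ.cells.card := by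
    apply Finset.eq_of_subset_of_card_le
    · intro x hx
      rcases Finset.mem_image.1 hx with ⟨c, hc, rfl⟩
      exact Finset.mem_Icc.2 (T.pos c.1 c.2 hc)
    · rw [Nat.card_Icc]
      rw [Finset.card_image_of_injOn]
      · omega
      · intro c hc c' hc' he
        exact T.inj c.1 c.2 c'.1 c'.2 hc hc' (by simpa using he)
  rw [← himg] at hv
  rcases Finset.mem_image.1 hv with ⟨c, hc, h⟩
  exact ⟨c, hc, h⟩

end SYTaux

namespace SYTaux2
open Finset

theorem lt_ext {a b : ℕ} (h : ∀ j, j < a ↔ j < b) : a = b := by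
  have h1 := h a; have h2 := h b; omega

theorem cell_bound {μ : YoungDiagram} {i j : ℕ} (h : (i, j) ∈ μ) :
    i < μ.cells.card ∧ j < μ.cells.card := by
  constructor
  · have hsub : (Finset.range (i + 1)).image (fun a => (a, j)) ⊆ μ.cells := by
      intro c hc
      rcases Finset.mem_image.1 hc with ⟨a, ha, rfl⟩
      rw [Finset.mem_range] at ha
      exact μ.up_left_mem (by omega) le_rfl h
    have := Finset.card_le_card hsub
    rwa [Finset.card_image_of_injective _ (fun a b hab => by simpa using hab),
      Finset.card_range, Nat.add_one_le_iff] at this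
  · have hsub : (Finset.range (j + 1)).image (fun b => (i, b)) ⊆ μ.cells := by
      intro c hc
      rcases Finset.mem_image.1 hc with ⟨b, hb, rfl⟩
      rw [Finset.mem_range] at hb
      exact μ.up_left_mem le_rfl (by omega) h
    have := Finset.card_le_card hsub
    rwa [Finset.card_image_of_injective _ (fun a b hab => by simpa using hab),
      Finset.card_range, Nat.add_one_le_iff] at this

theorem finite_card_eq (n : ℕ) : {μ : YoungDiagram | μ.cells.card = n}.Finite := by
  rw [← Set.finite_coe_iff]
  let f : {μ : YoungDiagram | μ.cells.card = n} → ((Finset.range n ×ˢ Finset.range n).powerset) :=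
    fun μ => ⟨μ.1.cells, by
      rw [Finset.mem_powerset]
      intro c hc
      have := cell_bound (μ := μ.1) (i := c.1) (j := c.2) (by simpa using hc)
      rw [μ.2] at this
      rcases c with ⟨a, b⟩
      exact Finset.mem_product.2 ⟨Finset.mem_range.2 this.1, Finset.mem_range.2 this.2⟩⟩
  have hf : Function.Injective f := by
    intro μ ν h
    have : μ.1.cells = ν.1.cells := by simpa [f, Subtype.ext_iff] using h
    exact Subtype.ext (YoungDiagram.ext this)
  exact Finite.of_injective f hf

/-- the finset of Young diagrams with n cells -/
noncomputable def YD (n : ℕ) : Finset YoungDiagram := (finite_card_eq n).toFinset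

@[simp] theorem mem_YD {n : ℕ} {μ : YoungDiagram} : μ ∈ YD n ↔ μ.cells.card = n := by
  simp [YD]

/-- the diagram obtained by deleting the first row -/
def rest (μ : YoungDiagram) : YoungDiagram where
  cells := (μ.cells.filter (fun c => c.1 ≠ 0)).image (fun c => (c.1 - 1, c.2))
  isLowerSet := by
    intro a b hba ha
    simp only [Finset.coe_image, Set.mem_image, Finset.mem_coe, Finset.mem_filter] at ha ⊢
    rcases ha with ⟨c, ⟨hc, hc0⟩, rfl⟩
    refine ⟨(b.1 + 1, b.2), ⟨?_, by omega⟩, by simp⟩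
    have h1 : b.1 + 1 ≤ c.1 := by
      have := hba.1; omega
    have h2 : b.2 ≤ c.2 := hba.2
    exact μ.up_left_mem h1 h2 (by simpa using hc)

@[simp] theorem mem_rest {μ : YoungDiagram} {i j : ℕ} :
    (i, j) ∈ rest μ ↔ (i + 1, j) ∈ μ := by
  constructor
  · intro h
    rw [← YoungDiagram.mem_cells] at h
    simp only [rest, Finset.mem_image, Finset.mem_filter] at h
    rcases h with ⟨c, ⟨hc, hc0⟩, hceq⟩
    have : c = (i + 1, j) := by
      rcases c with ⟨a, b⟩
      simp at hceq ⊢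
      omega
    rwa [this] at hc
  · intro h
    rw [← YoungDiagram.mem_cells]
    simp only [rest, Finset.mem_image, Finset.mem_filter]
    exact ⟨(i + 1, j), ⟨by simpa using h, by simp⟩, by simp⟩

theorem card_rest (μ : YoungDiagram) : (rest μ).cells.card = μ.cells.card - μ.rowLen 0 := by
  have himg : (rest μ).cells = (μ.cells.filter (fun c => c.1 ≠ 0)).image (fun c => (c.1 - 1, c.2)) := rfl
  rw [himg, Finset.card_image_of_injOn]
  · have := Finset.card_filter_add_card_filter_not (s := μ.cells) (p := fun c => c.1 = 0)
    have hrow : (μ.cells.filter (fun c => c.1 = 0)).card = μ.rowLen 0 := by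
      rw [μ.rowLen_eq_card, YoungDiagram.row]
    have h2 : (μ.cells.filter (fun c => ¬ c.1 = 0)).card = μ.cells.card - μ.rowLen 0 := by omega
    rw [← h2]
  · intro c hc c' hc' h
    simp only [Finset.mem_coe, Finset.mem_filter] at hc hc'
    rcases c with ⟨a, b⟩; rcases c' with ⟨a', b'⟩
    simp at h hc hc' ⊢
    omega

theorem rowLen_rest (μ : YoungDiagram) (i : ℕ) : (rest μ).rowLen i = μ.rowLen (i + 1) := by
  apply lt_ext
  intro j
  rw [← YoungDiagram.mem_iff_lt_rowLen, ← YoungDiagram.mem_iff_lt_rowLen]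
  exact mem_rest

theorem rest_injective {μ ν : YoungDiagram} (h0 : μ.rowLen 0 = ν.rowLen 0)
    (h : rest μ = rest ν) : μ = ν := by
  apply YoungDiagram.ext
  ext ⟨i, j⟩
  simp only [YoungDiagram.mem_cells]
  match i with
  | 0 =>
    rw [YoungDiagram.mem_iff_lt_rowLen, YoungDiagram.mem_iff_lt_rowLen, h0]
  | i + 1 =>
    rw [← mem_rest, ← mem_rest, h]

end SYTaux2
namespace SYTaux3
open Finset SYTaux SYTaux2

section Rank
variable (R : Finset ℕ)

/-- rank of v in R -/
def rk (v : ℕ) : ℕ := (R.filter (· ≤ v)).card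

theorem rk_pos {v : ℕ} (hv : v ∈ R) : 1 ≤ rk R v :=
  Finset.card_pos.2 ⟨v, Finset.mem_filter.2 ⟨hv, le_rfl⟩⟩

theorem rk_le (v : ℕ) : rk R v ≤ R.card := Finset.card_filter_le _ _

theorem rk_lt_rk {v w : ℕ} (hvw : v < w) (hw : w ∈ R) : rk R v < rk R w := by
  have hsub : insert w (R.filter (· ≤ v)) ⊆ R.filter (· ≤ w) := by
    intro x hx
    rcases Finset.mem_insert.1 hx with rfl | hx
    · exact Finset.mem_filter.2 ⟨hw, le_rfl⟩
    · rcases Finset.mem_filter.1 hx with ⟨h1, h2⟩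
      exact Finset.mem_filter.2 ⟨h1, h2.trans hvw.le⟩
  have hnot : w ∉ R.filter (· ≤ v) := by
    simp only [Finset.mem_filter]
    push_neg
    intro _
    omega
  have := Finset.card_le_card hsub
  rwa [Finset.card_insert_of_notMem hnot, Nat.add_one_le_iff] at this

theorem rk_injOn {v w : ℕ} (hv : v ∈ R) (hw : w ∈ R) (h : rk R v = rk R w) : v = w := by
  rcases lt_trichotomy v w with hlt | he | hlt
  · exact absurd h (Nat.ne_of_lt (rk_lt_rk R hlt hw))
  · exact he
  · exact absurd h.symm (Nat.ne_of_lt (rk_lt_rk R hlt hv))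

end Rank

section Part1

variable {μ : YoungDiagram} (T : SYT μ)

/-- the set of first-row values of T -/
def frv : Finset ℕ := (Finset.range (μ.rowLen 0)).image (fun j => T.entry 0 j)

theorem mem_row0 {j : ℕ} (hj : j < μ.rowLen 0) : (0, j) ∈ μ :=
  YoungDiagram.mem_iff_lt_rowLen.2 hj

theorem frv_subset : frv T ⊆ Finset.Icc 1 μ.cells.card := by
  intro v hv
  rcases Finset.mem_image.1 hv with ⟨j, hj, rfl⟩
  rw [Finset.mem_range] at hj
  exact Finset.mem_Icc.2 (T.pos 0 j (mem_row0 hj))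

theorem card_frv : (frv T).card = μ.rowLen 0 := by
  rw [frv, Finset.card_image_of_injOn, Finset.card_range]
  intro j hj j' hj' h
  rw [Finset.mem_coe, Finset.mem_range] at hj hj'
  have := T.inj 0 j 0 j' (mem_row0 hj) (mem_row0 hj') h
  simpa using this

/-- the values of T outside the first row -/
def nfr : Finset ℕ := (Finset.Icc 1 μ.cells.card) \ frv T

theorem card_nfr : (nfr T).card = μ.cells.card - μ.rowLen 0 := by
  rw [nfr, Finset.card_sdiff_of_subset (frv_subset T), Nat.card_Icc, card_frv]
  omega

theorem entry_mem_nfr {i j : ℕ} (h : (i + 1, j) ∈ μ) : T.entry (i + 1) j ∈ nfr T := by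
  rw [nfr, Finset.mem_sdiff]
  refine ⟨Finset.mem_Icc.2 (T.pos _ _ h), ?_⟩
  intro hmem
  rcases Finset.mem_image.1 hmem with ⟨j', hj', he⟩
  rw [Finset.mem_range] at hj'
  have := T.inj (i+1) j 0 j' h (mem_row0 hj') he.symm
  simp at this

/-- the standardized tableau on the diagram minus its first row -/
def restSYT : SYT (rest μ) where
  entry i j := if (i, j) ∈ rest μ then rk (nfr T) (T.entry (i + 1) j) else 0
  pos i j h := by
    rw [if_pos h]
    have hm : (i + 1, j) ∈ μ := mem_rest.1 h
    refine ⟨rk_pos _ (entry_mem_nfr T hm), ?_⟩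
    calc rk (nfr T) (T.entry (i+1) j) ≤ (nfr T).card := rk_le _ _
      _ = μ.cells.card - μ.rowLen 0 := card_nfr T
      _ = (rest μ).cells.card := (card_rest μ).symm
  inj i j i2 j2 h1 h2 he := by
    rw [if_pos h1, if_pos h2] at he
    have hv := rk_injOn (nfr T) (entry_mem_nfr T (mem_rest.1 h1))
      (entry_mem_nfr T (mem_rest.1 h2)) he
    have := T.inj _ _ _ _ (mem_rest.1 h1) (mem_rest.1 h2) hv
    simp only [Prod.mk.injEq] at this ⊢
    omega
  row_lt i j j2 h2 hj := by
    have h1 : (i, j) ∈ rest μ := (rest μ).up_left_mem le_rfl (le_of_lt hj) h2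
    rw [if_pos h1, if_pos h2]
    exact rk_lt_rk _ (T.row_lt (i+1) j j2 (mem_rest.1 h2) hj)
      (entry_mem_nfr T (mem_rest.1 h2))
  col_lt i i2 j h2 hi := by
    have h1 : (i, j) ∈ rest μ := (rest μ).up_left_mem (le_of_lt hi) le_rfl h2
    rw [if_pos h1, if_pos h2]
    exact rk_lt_rk _ (T.col_lt (i+1) (i2+1) j (mem_rest.1 h2) (by omega))
      (entry_mem_nfr T (mem_rest.1 h2))
  zero i j h := if_neg h

theorem part1_bound (μ : YoungDiagram) :
    Nat.card (SYT μ) ≤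
      (μ.cells.card.choose (μ.rowLen 0)) * Nat.card (SYT (rest μ)) := by
  set n := μ.cells.card with hn
  set r := μ.rowLen 0 with hr
  let P := (Finset.Icc 1 n).powersetCard r
  let Φ : SYT μ → (↥P × SYT (rest μ)) := fun T =>
    (⟨frv T, Finset.mem_powersetCard.2 ⟨frv_subset T, card_frv T⟩⟩, restSYT T)
  have hΦ : Function.Injective Φ := by
    intro T₁ T₂ h
    have hS : frv T₁ = frv T₂ := by
      have := congrArg Prod.fst h
      simpa [Φ, Subtype.ext_iff] using this
    have hR : nfr T₁ = nfr T₂ := by rw [nfr, nfr, hS]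
    have hT : restSYT T₁ = restSYT T₂ := congrArg Prod.snd h
    apply syt_ext_on_cells
    rintro ⟨⟩ j hc
    case zero =>
      -- first row
      have hjr : j < r := YoungDiagram.mem_iff_lt_rowLen.1 hc
      let f₁ : Fin r → ℕ := fun k => T₁.entry 0 k
      let f₂ : Fin r → ℕ := fun k => T₂.entry 0 k
      have hmono₁ : StrictMono f₁ := fun a b hab => T₁.row_lt 0 a b (mem_row0 b.2) hab
      have hmono₂ : StrictMono f₂ := fun a b hab => T₂.row_lt 0 a b (mem_row0 b.2) hab
      have hcard : (frv T₁).card = r := card_frv T₁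
      have h₁ : f₁ = (frv T₁).orderEmbOfFin hcard :=
        Finset.orderEmbOfFin_unique hcard
          (fun x => Finset.mem_image.2 ⟨x, Finset.mem_range.2 x.2, rfl⟩) hmono₁
      have h₂ : f₂ = (frv T₁).orderEmbOfFin hcard :=
        Finset.orderEmbOfFin_unique hcard
          (fun x => hS ▸ Finset.mem_image.2 ⟨x, Finset.mem_range.2 x.2, rfl⟩) hmono₂
      have := congrFun (h₁.trans h₂.symm) ⟨j, hjr⟩
      simpa [f₁, f₂] using this
    case succ i =>
      -- other rows
      have hrest : (i, j) ∈ rest μ := mem_rest.2 hc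
      have he : (restSYT T₁).entry i j = (restSYT T₂).entry i j := by rw [hT]
      rw [show (restSYT T₁).entry i j = rk (nfr T₁) (T₁.entry (i+1) j) from if_pos hrest,
        show (restSYT T₂).entry i j = rk (nfr T₂) (T₂.entry (i+1) j) from if_pos hrest,
        ← hR] at he
      exact rk_injOn _ (entry_mem_nfr T₁ hc) (hR ▸ entry_mem_nfr T₂ hc) he
  calc Nat.card (SYT μ) ≤ Nat.card (↥P × SYT (rest μ)) :=
        Nat.card_le_card_of_injective Φ hΦ
    _ = P.card * Nat.card (SYT (rest μ)) := by
        rw [Nat.card_prod, Nat.card_eq_finsetCard]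
    _ = n.choose r * Nat.card (SYT (rest μ)) := by
        have h1 : n + 1 - 1 = n := by omega
        have hP : P.card = n.choose r := by
          rw [Finset.card_powersetCard, Nat.card_Icc, h1]
        rw [hP]

end Part1
end SYTaux3
namespace SYTaux4
open Finset SYTaux SYTaux2 SYTaux3

instance : DecidableEq YoungDiagram := fun μ ν =>
  decidable_of_iff (μ.cells = ν.cells) ⟨YoungDiagram.ext, fun h => by rw [h]⟩

/-- diagrams covering κ -/
noncomputable def covers (κ : YoungDiagram) : Finset YoungDiagram :=
  (YD (κ.cells.card + 1)).filter (fun ν => κ.cells ⊆ ν.cells)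

/-- diagrams covered by ν -/
noncomputable def covered (ν : YoungDiagram) : Finset YoungDiagram :=
  (YD (ν.cells.card - 1)).filter (fun τ => τ.cells ⊆ ν.cells ∧ τ ≠ ν)

theorem mem_covers_iff {κ ν : YoungDiagram} :
    ν ∈ covers κ ↔ ν.cells.card = κ.cells.card + 1 ∧ κ.cells ⊆ ν.cells := by
  simp [covers]

theorem mem_covered_iff {ν τ : YoungDiagram} :
    τ ∈ covered ν ↔ τ.cells.card = ν.cells.card - 1 ∧ τ.cells ⊆ ν.cells ∧ τ ≠ ν := by
  simp [covered]

theorem covered_struct {ν τ : YoungDiagram} (h : τ ∈ covered ν) :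
    ∃ c, c ∈ ν.cells ∧ τ.cells = ν.cells.erase c ∧
      ν.cells.card = τ.cells.card + 1 := by
  obtain ⟨hcard, hsub, hne⟩ := mem_covered_iff.1 h
  have hss : τ.cells ⊂ ν.cells :=
    ⟨hsub, fun hsub' => hne (YoungDiagram.ext (Finset.Subset.antisymm hsub hsub'))⟩
  have hlt : τ.cells.card < ν.cells.card := Finset.card_lt_card hss
  have hc1 : ν.cells.card = τ.cells.card + 1 := by omega
  have hsd : (ν.cells \ τ.cells).card = 1 := by
    rw [Finset.card_sdiff_of_subset hsub]; omega
  obtain ⟨c, hc⟩ := Finset.card_eq_one.1 hsd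
  have hcm : c ∈ ν.cells \ τ.cells := hc ▸ Finset.mem_singleton_self c
  rw [Finset.mem_sdiff] at hcm
  refine ⟨c, hcm.1, ?_, hc1⟩
  apply Finset.eq_of_subset_of_card_le
  · intro x hx
    exact Finset.mem_erase.2 ⟨fun hxc => hcm.2 (hxc ▸ hx), hsub hx⟩
  · rw [Finset.card_erase_of_mem hcm.1]; omega

theorem covers_mem_covered {κ ν : YoungDiagram} (h : ν ∈ covers κ) : κ ∈ covered ν := by
  obtain ⟨hcard, hsub⟩ := mem_covers_iff.1 h
  refine mem_covered_iff.2 ⟨by omega, hsub, ?_⟩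
  intro he
  rw [he] at hcard
  omega

/-- erasing a maximal cell of a Young diagram -/
def eraseYD (ν : YoungDiagram) (c : ℕ × ℕ) (hmax : ∀ y ∈ ν.cells, c ≤ y → y = c) :
    YoungDiagram where
  cells := ν.cells.erase c
  isLowerSet := by
    intro a b hba ha
    simp only [Finset.coe_erase, Set.mem_diff, Finset.mem_coe, Set.mem_singleton_iff] at ha ⊢
    refine ⟨ν.isLowerSet hba ha.1, fun hbc => ?_⟩
    subst hbc
    exact ha.2 (hmax a ha.1 hba)

theorem nat_card_sigma {ι : Type*} [Fintype ι] (β : ι → Type*) [∀ i, Finite (β i)] :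
    Nat.card (Σ i, β i) = ∑ i, Nat.card (β i) := by
  letI : ∀ i, Fintype (β i) := fun i => Fintype.ofFinite _
  simp [Nat.card_eq_fintype_card]

section SubAdd

variable {ν κ : YoungDiagram} {c : ℕ × ℕ}

theorem mem_of_erase (hκ : κ.cells = ν.cells.erase c) {p : ℕ × ℕ} :
    p ∈ κ.cells ↔ p ∈ ν.cells ∧ p ≠ c := by
  rw [hκ, Finset.mem_erase, and_comm]

/-- restriction of an SYT to the diagram minus one cell, when the removed cell carries
the maximal entry -/
def subSYT (T : SYT ν) (hκ : κ.cells = ν.cells.erase c) (hcmem : c ∈ ν.cells)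
    (hcval : T.entry c.1 c.2 = ν.cells.card) : SYT κ where
  entry i j := if (i, j) ∈ κ.cells then T.entry i j else 0
  pos i j h := by
    have h' : (i, j) ∈ κ.cells := h
    rw [if_pos h']
    obtain ⟨hν, hne⟩ := (mem_of_erase hκ).1 h'
    refine ⟨(T.pos i j (by simpa using hν)).1, ?_⟩
    have hub := (T.pos i j (by simpa using hν)).2
    have hcard : κ.cells.card + 1 = ν.cells.card := by
      rw [hκ, Finset.card_erase_of_mem hcmem]
      have : 0 < ν.cells.card := Finset.card_pos.2 ⟨c, hcmem⟩
      omega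
    rcases Nat.lt_or_ge (T.entry i j) ν.cells.card with hlt | hge
    · omega
    · exfalso
      have heq : T.entry i j = T.entry c.1 c.2 := by omega
      have := T.inj i j c.1 c.2 (by simpa using hν) (by simpa using hcmem) heq
      exact hne this
  inj i j i2 j2 h1 h2 he := by
    have h1' : (i, j) ∈ κ.cells := h1
    have h2' : (i2, j2) ∈ κ.cells := h2
    rw [if_pos h1', if_pos h2'] at he
    exact T.inj i j i2 j2 (by simpa using ((mem_of_erase hκ).1 h1').1)
      (by simpa using ((mem_of_erase hκ).1 h2').1) he
  row_lt i j j2 h2 hj := by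
    have h2'' : (i, j2) ∈ κ.cells := h2
    rw [if_pos h2'']
    have hν2 : (i, j2) ∈ ν := by simpa using ((mem_of_erase hκ).1 h2'').1
    by_cases h1 : (i, j) ∈ κ.cells
    · rw [if_pos h1]
      exact T.row_lt i j j2 hν2 hj
    · rw [if_neg h1]
      exact (T.pos i j2 hν2).1
  col_lt i i2 j h2 hi := by
    have h2'' : (i2, j) ∈ κ.cells := h2
    rw [if_pos h2'']
    have hν2 : (i2, j) ∈ ν := by simpa using ((mem_of_erase hκ).1 h2'').1
    by_cases h1 : (i, j) ∈ κ.cells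
    · rw [if_pos h1]
      exact T.col_lt i i2 j hν2 hi
    · rw [if_neg h1]
      exact (T.pos i2 j hν2).1
  zero i j h := by
    rw [if_neg (by simpa using h)]

theorem subSYT_recon (T : SYT ν) (hκ : κ.cells = ν.cells.erase c) (hcmem : c ∈ ν.cells)
    (hcval : T.entry c.1 c.2 = ν.cells.card) :
    T.entry = fun i j => if (i, j) ∈ κ.cells then (subSYT T hκ hcmem hcval).entry i j
      else if (i, j) ∈ ν.cells then ν.cells.card else 0 := by
  funext i j
  by_cases h1 : (i, j) ∈ κ.cells
  · rw [if_pos h1]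
    show T.entry i j = if _ ∈ κ.cells then _ else _
    rw [if_pos h1]
  · rw [if_neg h1]
    by_cases h2 : (i, j) ∈ ν.cells
    · rw [if_pos h2]
      have : (i, j) = c := by
        by_contra hne
        exact h1 ((mem_of_erase hκ).2 ⟨h2, hne⟩)
      rw [show i = c.1 from congrArg Prod.fst this, show j = c.2 from congrArg Prod.snd this,
        hcval]
    · rw [if_neg h2]
      exact T.zero i j (by simpa using h2)

/-- extending an SYT by one cell carrying a new maximal entry -/
def addSYT (S : SYT κ) (hκ : κ.cells = ν.cells.erase c) (hcmem : c ∈ ν.cells) : SYT ν where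
  entry i j := if (i, j) ∈ κ.cells then S.entry i j else if (i, j) ∈ ν.cells then ν.cells.card else 0
  pos i j h := by
    have hcard : κ.cells.card + 1 = ν.cells.card := by
      rw [hκ, Finset.card_erase_of_mem hcmem]
      have : 0 < ν.cells.card := Finset.card_pos.2 ⟨c, hcmem⟩
      omega
    by_cases h1 : (i, j) ∈ κ.cells
    · rw [if_pos h1]
      have := S.pos i j (by simpa using h1)
      omega
    · rw [if_neg h1, if_pos (by simpa using h : (i, j) ∈ ν.cells)]
      omega
  inj i j i2 j2 h1 h2 he := by
    have hcard : κ.cells.card + 1 = ν.cells.card := by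
      rw [hκ, Finset.card_erase_of_mem hcmem]
      have : 0 < ν.cells.card := Finset.card_pos.2 ⟨c, hcmem⟩
      omega
    have h1' : (i, j) ∈ ν.cells := by simpa using h1
    have h2' : (i2, j2) ∈ ν.cells := by simpa using h2
    by_cases k1 : (i, j) ∈ κ.cells <;> by_cases k2 : (i2, j2) ∈ κ.cells
    · rw [if_pos k1, if_pos k2] at he
      exact S.inj i j i2 j2 (by simpa using k1) (by simpa using k2) he
    · rw [if_pos k1, if_neg k2, if_pos h2'] at he
      have := (S.pos i j (by simpa using k1)).2
      omega
    · rw [if_neg k1, if_pos k2, if_pos h1'] at he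
      have := (S.pos i2 j2 (by simpa using k2)).2
      omega
    · have e1 : (i, j) = c := by
        by_contra hne; exact k1 ((mem_of_erase hκ).2 ⟨h1', hne⟩)
      have e2 : (i2, j2) = c := by
        by_contra hne; exact k2 ((mem_of_erase hκ).2 ⟨h2', hne⟩)
      rw [e1, e2]
  row_lt i j j2 h2 hj := by
    have h2' : (i, j2) ∈ ν.cells := by simpa using h2
    have h1' : (i, j) ∈ ν.cells := by
      simpa using ν.up_left_mem le_rfl hj.le h2
    by_cases k2 : (i, j2) ∈ κ.cells
    · -- then (i,j) ∈ κ as κ is lower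
      have k1 : (i, j) ∈ κ.cells := by
        have : (i, j) ∈ κ := κ.up_left_mem le_rfl hj.le (by simpa using k2)
        simpa using this
      rw [if_pos k1, if_pos k2]
      exact S.row_lt i j j2 (by simpa using k2) hj
    · have e2 : (i, j2) = c := by
        by_contra hne; exact k2 ((mem_of_erase hκ).2 ⟨h2', hne⟩)
      rw [if_neg k2, if_pos h2']
      have k1 : (i, j) ∈ κ.cells := by
        refine (mem_of_erase hκ).2 ⟨h1', ?_⟩
        intro he
        rw [← e2] at he
        have := congrArg Prod.snd he
        simp at this
        omega
      rw [if_pos k1]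
      have h := (S.pos i j (by simpa using k1)).2
      have hcard : κ.cells.card + 1 = ν.cells.card := by
        rw [hκ, Finset.card_erase_of_mem hcmem]
        have : 0 < ν.cells.card := Finset.card_pos.2 ⟨c, hcmem⟩
        omega
      omega
  col_lt i i2 j h2 hi := by
    have h2' : (i2, j) ∈ ν.cells := by simpa using h2
    have h1' : (i, j) ∈ ν.cells := by
      simpa using ν.up_left_mem hi.le le_rfl h2
    by_cases k2 : (i2, j) ∈ κ.cells
    · have k1 : (i, j) ∈ κ.cells := by
        have : (i, j) ∈ κ := κ.up_left_mem hi.le le_rfl (by simpa using k2)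
        simpa using this
      rw [if_pos k1, if_pos k2]
      exact S.col_lt i i2 j (by simpa using k2) hi
    · have e2 : (i2, j) = c := by
        by_contra hne; exact k2 ((mem_of_erase hκ).2 ⟨h2', hne⟩)
      rw [if_neg k2, if_pos h2']
      have k1 : (i, j) ∈ κ.cells := by
        refine (mem_of_erase hκ).2 ⟨h1', ?_⟩
        intro he
        rw [← e2] at he
        have := congrArg Prod.fst he
        simp at this
        omega
      rw [if_pos k1]
      have h := (S.pos i j (by simpa using k1)).2
      have hcard : κ.cells.card + 1 = ν.cells.card := by
        rw [hκ, Finset.card_erase_of_mem hcmem]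
        have : 0 < ν.cells.card := Finset.card_pos.2 ⟨c, hcmem⟩
        omega
      omega
  zero i j h := by
    have hν : (i, j) ∉ ν.cells := by simpa using h
    rw [if_neg (fun hk => hν (Finset.erase_subset _ _ (hκ ▸ hk))), if_neg hν]

theorem addSYT_cells (S : SYT κ) (hκ : κ.cells = ν.cells.erase c) (hcmem : c ∈ ν.cells) :
    κ.cells = ν.cells.filter
      (fun p => (addSYT S hκ hcmem).entry p.1 p.2 ≠ ν.cells.card) := by
  have hcard : κ.cells.card + 1 = ν.cells.card := by
    rw [hκ, Finset.card_erase_of_mem hcmem]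
    have : 0 < ν.cells.card := Finset.card_pos.2 ⟨c, hcmem⟩
    omega
  ext p
  rw [Finset.mem_filter]
  constructor
  · intro hp
    refine ⟨Finset.erase_subset _ _ (hκ ▸ hp), ?_⟩
    show (if (p.1, p.2) ∈ κ.cells then S.entry p.1 p.2
      else if (p.1, p.2) ∈ ν.cells then ν.cells.card else 0) ≠ ν.cells.card
    rw [if_pos (by simpa using hp)]
    have := (S.pos p.1 p.2 (by simpa using hp)).2
    omega
  · rintro ⟨hp, hne⟩
    by_contra hk
    apply hne
    show (if (p.1, p.2) ∈ κ.cells then S.entry p.1 p.2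
      else if (p.1, p.2) ∈ ν.cells then ν.cells.card else 0) = ν.cells.card
    rw [if_neg (by simpa using hk), if_pos (by simpa using hp)]

theorem addSYT_entry (S : SYT κ) (hκ : κ.cells = ν.cells.erase c) (hcmem : c ∈ ν.cells) :
    S.entry = fun i j => if (i, j) ∈ κ.cells then (addSYT S hκ hcmem).entry i j else 0 := by
  funext i j
  by_cases h1 : (i, j) ∈ κ.cells
  · rw [if_pos h1]
    show S.entry i j = if _ ∈ κ.cells then _ else _
    rw [if_pos h1]
  · rw [if_neg h1]
    exact S.zero i j (by simpa using h1)

end SubAdd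

/-- L1 : remove-max injection bound -/
theorem F_le_sum_covered (ν : YoungDiagram) (hpos : 0 < ν.cells.card) :
    Nat.card (SYT ν) ≤ ∑ κ ∈ covered ν, Nat.card (SYT κ) := by
  classical
  have key : ∀ T : SYT ν, ∃ p : Σ κ : ↥(covered ν), SYT κ.1,
      T.entry = fun i j => if (i, j) ∈ p.1.1.cells then p.2.entry i j
        else if (i, j) ∈ ν.cells then ν.cells.card else 0 := by
    intro T
    obtain ⟨c, hcmem, hcval⟩ := entry_surj T (v := ν.cells.card)
      (Finset.mem_Icc.2 ⟨by omega, le_rfl⟩)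
    have hmax : ∀ y ∈ ν.cells, c ≤ y → y = c := by
      intro y hy hcy
      by_contra hne
      have hlt := entry_lt_entry T (a := c.1) (b := c.2) (c := y.1) (d := y.2)
        (by simpa using hy) hcy.1 hcy.2
        (by
          intro h
          apply hne
          have h2 : (y.1, y.2) = (c.1, c.2) := Prod.ext_iff.2 (by simpa [eq_comm] using Prod.ext_iff.1 h)
          simpa using h2)
      rw [hcval] at hlt
      have := (T.pos y.1 y.2 (by simpa using hy)).2
      omega
    let κ : YoungDiagram := eraseYD ν c hmax
    have hκ : κ.cells = ν.cells.erase c := rfl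
    have hκmem : κ ∈ covered ν := by
      refine mem_covered_iff.2 ⟨?_, ?_, ?_⟩
      · rw [hκ, Finset.card_erase_of_mem hcmem]
      · rw [hκ]; exact Finset.erase_subset _ _
      · intro he
        have : c ∈ κ.cells := he ▸ hcmem
        rw [hκ] at this
        exact (Finset.mem_erase.1 this).1 rfl
    exact ⟨⟨⟨κ, hκmem⟩, subSYT T hκ hcmem hcval⟩, subSYT_recon T hκ hcmem hcval⟩
  choose Φ hΦ using key
  have hinj : Function.Injective Φ := by
    intro T₁ T₂ h
    apply SYT.ext'
    rw [hΦ T₁, hΦ T₂, h]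
  calc Nat.card (SYT ν) ≤ Nat.card (Σ κ : ↥(covered ν), SYT κ.1) :=
        Nat.card_le_card_of_injective Φ hinj
    _ = ∑ κ : ↥(covered ν), Nat.card (SYT κ.1) := nat_card_sigma _
    _ = ∑ κ ∈ covered ν, Nat.card (SYT κ) := Finset.sum_coe_sort (covered ν) (fun κ => Nat.card (SYT κ))

/-- L2 : add-max injection bound -/
theorem sum_covered_le_F (ν : YoungDiagram) :
    ∑ κ ∈ covered ν, Nat.card (SYT κ) ≤ Nat.card (SYT ν) := by
  classical
  have key : ∀ p : Σ κ : ↥(covered ν), SYT κ.1, ∃ T : SYT ν,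
      p.1.1.cells = ν.cells.filter (fun q => T.entry q.1 q.2 ≠ ν.cells.card) ∧
      p.2.entry = fun i j => if (i, j) ∈ p.1.1.cells then T.entry i j else 0 := by
    rintro ⟨⟨κ, hκmem⟩, S⟩
    obtain ⟨c, hcmem, hκ, _⟩ := covered_struct hκmem
    exact ⟨addSYT S hκ hcmem, addSYT_cells S hκ hcmem, addSYT_entry S hκ hcmem⟩
  choose Φ hΦ using key
  have hinj : Function.Injective Φ := by
    rintro ⟨⟨κ₁, h₁⟩, S₁⟩ ⟨⟨κ₂, h₂⟩, S₂⟩ h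
    obtain ⟨hc₁, he₁⟩ := hΦ ⟨⟨κ₁, h₁⟩, S₁⟩
    obtain ⟨hc₂, he₂⟩ := hΦ ⟨⟨κ₂, h₂⟩, S₂⟩
    rw [h] at hc₁ he₁
    have hκeq : κ₁ = κ₂ := YoungDiagram.ext (hc₁.trans hc₂.symm)
    subst hκeq
    have : S₁ = S₂ := SYT.ext' (he₁.trans he₂.symm)
    rw [this]
  calc ∑ κ ∈ covered ν, Nat.card (SYT κ)
      = ∑ κ : ↥(covered ν), Nat.card (SYT κ.1) := (Finset.sum_coe_sort (covered ν) (fun κ => Nat.card (SYT κ))).symm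
    _ = Nat.card (Σ κ : ↥(covered ν), SYT κ.1) := (nat_card_sigma _).symm
    _ ≤ Nat.card (SYT ν) := Nat.card_le_card_of_injective Φ hinj

end SYTaux4
namespace SYTaux5
open Finset SYTaux SYTaux2 SYTaux3 SYTaux4

/-- the row of the unique cell of ν not in κ -/
def nrow (κ ν : YoungDiagram) : ℕ := ((ν.cells \ κ.cells).sum Prod.fst)

theorem covers_struct {κ ν : YoungDiagram} (h : ν ∈ covers κ) :
    ∃ i, (i, κ.rowLen i) ∉ κ.cells ∧ ν.cells = insert (i, κ.rowLen i) κ.cells ∧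
      nrow κ ν = i := by
  obtain ⟨hcard, hsub⟩ := mem_covers_iff.1 h
  have hsd : (ν.cells \ κ.cells).card = 1 := by
    rw [Finset.card_sdiff_of_subset hsub]; omega
  obtain ⟨c, hc⟩ := Finset.card_eq_one.1 hsd
  have hcm : c ∈ ν.cells \ κ.cells := hc ▸ Finset.mem_singleton_self c
  rw [Finset.mem_sdiff] at hcm
  obtain ⟨hcν, hcκ⟩ := hcm
  have hcells : ν.cells = insert c κ.cells := by
    apply Finset.eq_of_subset_of_card_le _ (by rw [Finset.card_insert_of_notMem hcκ, hcard])
    · intro x hx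
      by_cases hxκ : x ∈ κ.cells
      · exact Finset.mem_insert_of_mem hxκ
      · have : x ∈ ν.cells \ κ.cells := Finset.mem_sdiff.2 ⟨hx, hxκ⟩
        rw [hc, Finset.mem_singleton] at this
        exact this ▸ Finset.mem_insert_self _ _
  obtain ⟨a, b⟩ := c
  have hb : b = κ.rowLen a := by
    have hnlt : ¬ b < κ.rowLen a := fun hl =>
      hcκ (by simpa using YoungDiagram.mem_iff_lt_rowLen.2 hl)
    have hle : b ≤ κ.rowLen a := by
      by_contra hgt
      push_neg at hgt
      have h1 : (a, κ.rowLen a) ∈ ν := ν.up_left_mem le_rfl (le_of_lt hgt) (by simpa using hcν)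
      have h2 : (a, κ.rowLen a) ∈ κ.cells := by
        have h3 : (a, κ.rowLen a) ∈ ν.cells := by simpa using h1
        rw [hcells, Finset.mem_insert] at h3
        rcases h3 with heq | hm
        · exfalso; have := congrArg Prod.snd heq; simp only at this; omega
        · exact hm
      have := YoungDiagram.mem_iff_lt_rowLen.1 (by simpa using h2)
      omega
    omega
  subst hb
  refine ⟨a, hcκ, hcells, ?_⟩
  rw [nrow, hc, Finset.sum_singleton]

theorem covers_inj {κ : YoungDiagram} :
    Set.InjOn (nrow κ) (covers κ) := by
  intro ν₁ h₁ ν₂ h₂ he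
  obtain ⟨i₁, _, hc₁, hn₁⟩ := covers_struct (Finset.mem_coe.1 h₁)
  obtain ⟨i₂, _, hc₂, hn₂⟩ := covers_struct (Finset.mem_coe.1 h₂)
  apply YoungDiagram.ext
  rw [hc₁, hc₂]
  rw [hn₁] at he; rw [hn₂] at he
  rw [he]

theorem covered_struct' {κ τ : YoungDiagram} (h : τ ∈ covered κ) :
    ∃ i, 0 < κ.rowLen i ∧ τ.cells = κ.cells.erase (i, κ.rowLen i - 1) ∧
      nrow τ κ = i := by
  obtain ⟨c, hcκ, hτ, hcard⟩ := covered_struct h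
  have hcτ : c ∉ τ.cells := by
    rw [hτ]; exact Finset.notMem_erase _ _
  obtain ⟨a, b⟩ := c
  have hblt : b < κ.rowLen a := YoungDiagram.mem_iff_lt_rowLen.1 (by simpa using hcκ)
  have hb : b = κ.rowLen a - 1 := by
    by_contra hne
    have hlt : b + 1 < κ.rowLen a := by omega
    have h1 : (a, b + 1) ∈ κ.cells := by
      simpa using (YoungDiagram.mem_iff_lt_rowLen.2 hlt : (a, b+1) ∈ κ)
    have h2 : (a, b + 1) ∈ τ.cells := by
      rw [hτ, Finset.mem_erase]
      exact ⟨fun heq => by have := congrArg Prod.snd heq; simp only at this; omega, h1⟩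
    have h3 : (a, b) ∈ τ := τ.up_left_mem le_rfl (Nat.le_succ b) (by simpa using h2)
    exact hcτ (by simpa using h3)
  subst hb
  refine ⟨a, by omega, hτ, ?_⟩
  rw [nrow, hτ, Finset.sdiff_erase_self hcκ, Finset.sum_singleton]

theorem covered_inj {κ : YoungDiagram} :
    Set.InjOn (fun τ => nrow τ κ) (covered κ) := by
  intro τ₁ h₁ τ₂ h₂ he
  obtain ⟨i₁, _, hc₁, hn₁⟩ := covered_struct' (Finset.mem_coe.1 h₁)
  obtain ⟨i₂, _, hc₂, hn₂⟩ := covered_struct' (Finset.mem_coe.1 h₂)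
  simp only at he
  have hii : i₁ = i₂ := by rw [← hn₁, ← hn₂, he]
  apply YoungDiagram.ext
  rw [hc₁, hc₂, hii]

/-- L3 : the number of covers exceeds the number of covered by at most 1 -/
theorem card_covers_le (κ : YoungDiagram) :
    (covers κ).card ≤ (covered κ).card + 1 := by
  classical
  have hA : ((covers κ).image (nrow κ)).card = (covers κ).card :=
    Finset.card_image_of_injOn covers_inj
  have hR : ((covered κ).image (fun τ => nrow τ κ)).card = (covered κ).card :=
    Finset.card_image_of_injOn covered_inj
  have hsub : (covers κ).image (nrow κ) ⊆
      insert 0 (((covered κ).image (fun τ => nrow τ κ)).image (· + 1)) := by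
    intro i0 hi0
    rcases Finset.mem_image.1 hi0 with ⟨ν, hν, rfl⟩
    rcases Nat.eq_zero_or_pos (nrow κ ν) with h0 | hpos
    · rw [h0]; exact Finset.mem_insert_self _ _
    · obtain ⟨i, hiκ, hcells, hni⟩ := covers_struct hν
      rw [hni] at hpos ⊢
      obtain ⟨i', rfl⟩ : ∃ i', i = i' + 1 := ⟨i - 1, by omega⟩
      set L' := κ.rowLen (i' + 1) with hL'
      set L := κ.rowLen i' with hL
      have hnew : (i' + 1, L') ∈ ν.cells := by
        rw [hcells]; exact Finset.mem_insert_self _ _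
      have h1 : (i', L') ∈ ν := ν.up_left_mem (Nat.le_succ i') le_rfl (by simpa using hnew)
      have h1' : (i', L') ∈ κ.cells := by
        have h3 : (i', L') ∈ ν.cells := by simpa using h1
        rw [hcells, Finset.mem_insert] at h3
        rcases h3 with heq | hm
        · exfalso; have := congrArg Prod.fst heq; simp only at this; omega
        · exact hm
      have hlt : L' < L := YoungDiagram.mem_iff_lt_rowLen.1 (by simpa using h1')
      have hmem' : (i', L - 1) ∈ κ.cells := by
        simpa using (YoungDiagram.mem_iff_lt_rowLen.2 (by omega) : (i', L - 1) ∈ κ)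
      have hmax : ∀ y ∈ κ.cells, (i', L - 1) ≤ y → y = (i', L - 1) := by
        rintro ⟨a, b⟩ hy hab
        obtain ⟨ha, hb⟩ := Prod.mk_le_mk.1 hab
        have hba : b < κ.rowLen a := YoungDiagram.mem_iff_lt_rowLen.1 (by simpa using hy)
        rcases Nat.lt_or_ge a (i' + 1) with haa | haa
        · have haa' : a = i' := by omega
          subst haa'
          have hbb : b = L - 1 := by rw [← hL] at hba; omega
          rw [hbb]
        · exfalso
          have := κ.rowLen_anti (i' + 1) a haa
          omega
      let τ : YoungDiagram := eraseYD κ (i', L - 1) hmax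
      have hτc : τ.cells = κ.cells.erase (i', L - 1) := rfl
      have hτmem : τ ∈ covered κ := by
        refine mem_covered_iff.2 ⟨?_, ?_, ?_⟩
        · rw [hτc, Finset.card_erase_of_mem hmem']
        · rw [hτc]; exact Finset.erase_subset _ _
        · intro he
          have : (i', L - 1) ∈ τ.cells := he ▸ hmem'
          rw [hτc] at this
          exact (Finset.mem_erase.1 this).1 rfl
      have hnτ : nrow τ κ = i' := by
        rw [nrow, hτc, Finset.sdiff_erase_self hmem', Finset.sum_singleton]
      exact Finset.mem_insert_of_mem (Finset.mem_image.2 ⟨i',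
        Finset.mem_image.2 ⟨τ, hτmem, hnτ⟩, rfl⟩)
  calc (covers κ).card = ((covers κ).image (nrow κ)).card := hA.symm
    _ ≤ (insert 0 (((covered κ).image (fun τ => nrow τ κ)).image (· + 1))).card :=
        Finset.card_le_card hsub
    _ ≤ (((covered κ).image (fun τ => nrow τ κ)).image (· + 1)).card + 1 := by
        have := Finset.card_insert_le 0 (((covered κ).image (fun τ => nrow τ κ)).image (· + 1))
        omega
    _ ≤ (covered κ).card + 1 := by
      have h1 := Finset.card_image_le (s := (covered κ).image (fun τ => nrow τ κ)) (f := (· + 1))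
      omega

/-- L4 : common covers are at most common covered -/
theorem cc_le_cs {κ κ' : YoungDiagram} (hcard : κ'.cells.card = κ.cells.card)
    (hne : κ' ≠ κ) :
    ((covers κ).filter (fun ν => κ'.cells ⊆ ν.cells)).card ≤
      ((covered κ).filter (fun τ => τ.cells ⊆ κ'.cells)).card := by
  classical
  rcases Finset.eq_empty_or_nonempty ((covers κ).filter (fun ν => κ'.cells ⊆ ν.cells)) with he | hne'
  · rw [he]; simp
  obtain ⟨ν, hν⟩ := hne'
  rw [Finset.mem_filter] at hν
  obtain ⟨hνc, hκ'ν⟩ := hν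
  obtain ⟨hνcard, hκν⟩ := mem_covers_iff.1 hνc
  set k := κ.cells.card with hk
  have hnotsub : ¬ κ'.cells ⊆ κ.cells := by
    intro hsub
    exact hne (YoungDiagram.ext (Finset.eq_of_subset_of_card_le hsub (by omega)))
  have hun : κ.cells ∪ κ'.cells = ν.cells := by
    apply Finset.eq_of_subset_of_card_le (Finset.union_subset hκν hκ'ν)
    rw [hνcard]
    have hss : κ.cells ⊂ κ.cells ∪ κ'.cells := by
      refine Finset.ssubset_iff_of_subset Finset.subset_union_left |>.2 ?_
      obtain ⟨x, hx1, hx2⟩ := Finset.not_subset.1 hnotsub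
      exact ⟨x, Finset.mem_union_right _ hx1, hx2⟩
    have := Finset.card_lt_card hss
    omega
  have hinter : (κ.cells ∩ κ'.cells).card = k - 1 := by
    have h5 := Finset.card_union_add_card_inter κ.cells κ'.cells
    rw [hun, hνcard, hcard] at h5
    have hk1 : 1 ≤ k := by
      rcases Nat.eq_zero_or_pos k with h0 | h1
      · exfalso
        apply hnotsub
        have h6 : κ'.cells.card = 0 := by omega
        rw [Finset.card_eq_zero.1 h6]
        exact Finset.empty_subset _
      · exact h1
    omega
  have hsingle : ((covers κ).filter (fun ν => κ'.cells ⊆ ν.cells)).card ≤ 1 := by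
    apply Finset.card_le_one.2
    intro a ha b hb
    rw [Finset.mem_filter] at ha hb
    obtain ⟨hac, ha'⟩ := ha
    obtain ⟨hacard, haκ⟩ := mem_covers_iff.1 hac
    obtain ⟨hbc, hb'⟩ := hb
    obtain ⟨hbcard, hbκ⟩ := mem_covers_iff.1 hbc
    have h1 : κ.cells ∪ κ'.cells = a.cells := by
      apply Finset.eq_of_subset_of_card_le (Finset.union_subset haκ ha')
      rw [hacard, ← hνcard, ← hun]
    have h2 : κ.cells ∪ κ'.cells = b.cells := by
      apply Finset.eq_of_subset_of_card_le (Finset.union_subset hbκ hb')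
      rw [hbcard, ← hνcard, ← hun]
    exact YoungDiagram.ext (h1 ▸ h2 ▸ rfl)
  have hmem : κ ⊓ κ' ∈ (covered κ).filter (fun τ => τ.cells ⊆ κ'.cells) := by
    rw [Finset.mem_filter]
    constructor
    · refine mem_covered_iff.2 ⟨?_, ?_, ?_⟩
      · rw [YoungDiagram.cells_inf, hinter, ← hk]
      · rw [YoungDiagram.cells_inf]; exact Finset.inter_subset_left
      · intro heq
        have h7 : (κ ⊓ κ').cells.card = k := by rw [heq]
        rw [YoungDiagram.cells_inf, hinter] at h7
        have hk1 : 1 ≤ k := by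
          by_contra h0
          apply hnotsub
          have h6 : κ'.cells.card = 0 := by omega
          rw [Finset.card_eq_zero.1 h6]
          exact Finset.empty_subset _
        omega
    · rw [YoungDiagram.cells_inf]; exact Finset.inter_subset_right
  have : 1 ≤ ((covered κ).filter (fun τ => τ.cells ⊆ κ'.cells)).card :=
    Finset.card_pos.2 ⟨_, hmem⟩
  omega

end SYTaux5
namespace SYTaux6
open Finset SYTaux SYTaux2 SYTaux3 SYTaux4 SYTaux5

local notation "F" ν => Nat.card (SYT ν)

theorem swap_count (s : Finset YoungDiagram) (k : ℕ) (hs : ∀ ν ∈ s, ν.cells.card = k + 1)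
    (g : YoungDiagram → YoungDiagram → ℕ) :
    ∑ ν ∈ s, ∑ κ ∈ covered ν, g κ ν
      = ∑ κ ∈ YD k, ∑ ν ∈ s.filter (fun ν => κ.cells ⊆ ν.cells), g κ ν := by
  classical
  have h1 : ∀ ν ∈ s, covered ν = (YD k).filter (fun κ => κ.cells ⊆ ν.cells ∧ κ ≠ ν) := by
    intro ν hν
    have hc : ν.cells.card - 1 = k := by rw [hs ν hν]; omega
    rw [covered, hc]
  calc ∑ ν ∈ s, ∑ κ ∈ covered ν, g κ ν
      = ∑ ν ∈ s, ∑ κ ∈ YD k, if κ.cells ⊆ ν.cells ∧ κ ≠ ν then g κ ν else 0 :=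
        Finset.sum_congr rfl (fun ν hν => by rw [h1 ν hν, Finset.sum_filter])
    _ = ∑ κ ∈ YD k, ∑ ν ∈ s, if κ.cells ⊆ ν.cells ∧ κ ≠ ν then g κ ν else 0 :=
        Finset.sum_comm
    _ = ∑ κ ∈ YD k, ∑ ν ∈ s, if κ.cells ⊆ ν.cells then g κ ν else 0 := by
        apply Finset.sum_congr rfl
        intro κ hκ
        apply Finset.sum_congr rfl
        intro ν hν
        have hiff : (κ.cells ⊆ ν.cells ∧ κ ≠ ν) ↔ κ.cells ⊆ ν.cells := by
          refine ⟨And.left, fun h => ⟨h, fun he => ?_⟩⟩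
          have h1 := mem_YD.1 hκ
          have h2 := hs ν hν
          rw [he] at h1
          omega
        simp only [hiff]
    _ = ∑ κ ∈ YD k, ∑ ν ∈ s.filter (fun ν => κ.cells ⊆ ν.cells), g κ ν :=
        Finset.sum_congr rfl (fun κ _ => (Finset.sum_filter _ _).symm)

theorem YD_filter_covers {κ : YoungDiagram} {k : ℕ} (hκ : κ.cells.card = k) :
    (YD (k + 1)).filter (fun ν => κ.cells ⊆ ν.cells) = covers κ := by
  rw [covers, hκ]

/-- the key induction: the sum of F over covers of κ is at most (k+1) F κ -/
theorem covers_sum_le : ∀ k : ℕ, ∀ κ : YoungDiagram, κ.cells.card = k →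
    ∑ ν ∈ covers κ, (F ν) ≤ (k + 1) * (F κ) := by
  intro k
  induction k using Nat.strong_induction_on with
  | _ k ih =>
    intro κ hκ
    classical
    have hκY : κ ∈ YD k := mem_YD.2 hκ
    -- Step A : L1 on each cover
    have hstep1 : ∑ ν ∈ covers κ, (F ν) ≤
        ∑ ν ∈ covers κ, ∑ κ' ∈ covered ν, (F κ') := by
      apply Finset.sum_le_sum
      intro ν hν
      exact F_le_sum_covered ν (by rw [(mem_covers_iff.1 hν).1]; omega)
    -- Step B : double counting
    have hstep2 : ∑ ν ∈ covers κ, ∑ κ' ∈ covered ν, (F κ')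
        = ∑ κ' ∈ YD k, ((covers κ).filter (fun ν => κ'.cells ⊆ ν.cells)).card * (F κ') := by
      rw [swap_count (covers κ) k (fun ν hν => (mem_covers_iff.1 hν).1.trans (by rw [hκ])) 
        (fun κ' _ => F κ')]
      apply Finset.sum_congr rfl
      intro κ' _
      rw [Finset.sum_const, smul_eq_mul]
    -- notation
    set cc : YoungDiagram → ℕ :=
      fun κ' => ((covers κ).filter (fun ν => κ'.cells ⊆ ν.cells)).card with hcc
    set cs : YoungDiagram → ℕ :=
      fun κ' => ((covered κ).filter (fun τ => τ.cells ⊆ κ'.cells)).card with hcs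
    -- Step C : bound cc by cs
    have hccκ : cc κ = (covers κ).card := by
      rw [hcc]
      show ((covers κ).filter (fun ν => κ.cells ⊆ ν.cells)).card = (covers κ).card
      rw [Finset.filter_true_of_mem (fun ν hν => (mem_covers_iff.1 hν).2)]
    have hcsκ : cs κ = (covered κ).card := by
      rw [hcs]
      show ((covered κ).filter (fun τ => τ.cells ⊆ κ.cells)).card = (covered κ).card
      rw [Finset.filter_true_of_mem (fun τ hτ => (mem_covered_iff.1 hτ).2.1)]
    have hstep3 : ∑ κ' ∈ YD k, cc κ' * (F κ')
        ≤ (∑ κ' ∈ YD k, cs κ' * (F κ')) + (F κ) := by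
      rw [← Finset.sum_erase_add (YD k) _ hκY, ← Finset.sum_erase_add (YD k)
        (fun κ' => cs κ' * (F κ')) hκY]
      have h1 : ∑ κ' ∈ (YD k).erase κ, cc κ' * (F κ')
          ≤ ∑ κ' ∈ (YD k).erase κ, cs κ' * (F κ') := by
        apply Finset.sum_le_sum
        intro κ' hκ'
        obtain ⟨hne, hmem⟩ := Finset.mem_erase.1 hκ'
        exact Nat.mul_le_mul_right _
          (cc_le_cs (by rw [mem_YD.1 hmem, hκ]) hne)
      have h2 : cc κ * (F κ) ≤ cs κ * (F κ) + (F κ) := by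
        rw [hccκ, hcsκ]
        have := card_covers_le κ
        calc (covers κ).card * (F κ) ≤ ((covered κ).card + 1) * (F κ) :=
              Nat.mul_le_mul_right _ this
          _ = (covered κ).card * (F κ) + (F κ) := by ring
      omega
    -- Step D : the cs-sum is at most k * F κ
    have hstep4 : ∑ κ' ∈ YD k, cs κ' * (F κ') ≤ k * (F κ) := by
      have hD1 : ∑ κ' ∈ YD k, cs κ' * (F κ')
          = ∑ τ ∈ covered κ, ∑ κ' ∈ covers τ, (F κ') := by
        rw [hcs]
        calc ∑ κ' ∈ YD k, ((covered κ).filter (fun τ => τ.cells ⊆ κ'.cells)).card * (F κ')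
            = ∑ κ' ∈ YD k, ∑ τ ∈ covered κ, (if τ.cells ⊆ κ'.cells then (F κ') else 0) := by
              apply Finset.sum_congr rfl
              intro κ' _
              rw [← Finset.sum_filter, Finset.sum_const, smul_eq_mul]
          _ = ∑ τ ∈ covered κ, ∑ κ' ∈ YD k, (if τ.cells ⊆ κ'.cells then (F κ') else 0) :=
              Finset.sum_comm
          _ = ∑ τ ∈ covered κ, ∑ κ' ∈ covers τ, (F κ') := by
              apply Finset.sum_congr rfl
              intro τ hτ
              obtain ⟨hcard, hsub, hne⟩ := mem_covered_iff.1 hτ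
              have hk1 : 1 ≤ k := by
                have hss : τ.cells ⊂ κ.cells := ⟨hsub,
                  fun h => hne (YoungDiagram.ext (Finset.Subset.antisymm hsub h))⟩
                have := Finset.card_lt_card hss
                omega
              have hτcard : τ.cells.card + 1 = k := by rw [hcard, hκ]; omega
              rw [← Finset.sum_filter, covers, hτcard]
      rw [hD1]
      have hD2 : ∑ τ ∈ covered κ, ∑ κ' ∈ covers τ, (F κ')
          ≤ ∑ τ ∈ covered κ, k * (F τ) := by
        apply Finset.sum_le_sum
        intro τ hτ
        obtain ⟨hcard, hsub, hne⟩ := mem_covered_iff.1 hτ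
        have hk1 : 1 ≤ k := by
          have hss : τ.cells ⊂ κ.cells := ⟨hsub,
            fun h => hne (YoungDiagram.ext (Finset.Subset.antisymm hsub h))⟩
          have := Finset.card_lt_card hss
          omega
        have hτcard : τ.cells.card = k - 1 := by rw [hcard, hκ]
        have := ih (k - 1) (by omega) τ hτcard
        calc ∑ κ' ∈ covers τ, (F κ') ≤ (k - 1 + 1) * (F τ) := this
          _ = k * (F τ) := by congr 1; omega
      calc ∑ τ ∈ covered κ, ∑ κ' ∈ covers τ, (F κ') ≤ ∑ τ ∈ covered κ, k * (F τ) := hD2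
        _ = k * ∑ τ ∈ covered κ, (F τ) := (Finset.mul_sum _ _ _).symm
        _ ≤ k * (F κ) := Nat.mul_le_mul_left _ (sum_covered_le_F κ)
    calc ∑ ν ∈ covers κ, (F ν)
        ≤ ∑ ν ∈ covers κ, ∑ κ' ∈ covered ν, (F κ') := hstep1
      _ = ∑ κ' ∈ YD k, cc κ' * (F κ') := hstep2
      _ ≤ (∑ κ' ∈ YD k, cs κ' * (F κ')) + (F κ) := hstep3
      _ ≤ k * (F κ) + (F κ) := by omega
      _ = (k + 1) * (F κ) := by ring

theorem YD_zero : YD 0 = {⊥} := by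
  ext μ
  rw [mem_YD, Finset.mem_singleton]
  constructor
  · intro h
    apply YoungDiagram.ext
    rw [YoungDiagram.cells_bot, Finset.card_eq_zero.1 h]
  · intro h
    rw [h, YoungDiagram.cells_bot]
    rfl

instance : Nonempty (SYT (⊥ : YoungDiagram)) :=
  ⟨{ entry := fun _ _ => 0
     pos := fun i j h => absurd h (YoungDiagram.notMem_bot _)
     inj := fun i j i2 j2 h => absurd h (YoungDiagram.notMem_bot _)
     row_lt := fun i j j2 h => absurd h (YoungDiagram.notMem_bot _)
     col_lt := fun i i2 j h => absurd h (YoungDiagram.notMem_bot _)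
     zero := fun _ _ _ => rfl }⟩

instance : Subsingleton (SYT (⊥ : YoungDiagram)) :=
  ⟨fun T₁ T₂ => syt_ext_on_cells (fun i j h => absurd h (YoungDiagram.notMem_bot _))⟩

theorem F_bot : Nat.card (SYT (⊥ : YoungDiagram)) = 1 := Nat.card_unique

/-- the RSK bound : the sum over partitions of k of (f^ν)² is at most k! -/
theorem sum_sq_le (k : ℕ) : ∑ ν ∈ YD k, (F ν) * (F ν) ≤ k.factorial := by
  induction k with
  | zero =>
    rw [YD_zero, Finset.sum_singleton, F_bot]
    norm_num [Nat.factorial]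
  | succ m ihm =>
    have hstep1 : ∑ ν ∈ YD (m + 1), (F ν) * (F ν)
        ≤ ∑ ν ∈ YD (m + 1), ∑ κ ∈ covered ν, (F κ) * (F ν) := by
      apply Finset.sum_le_sum
      intro ν hν
      rw [← Finset.sum_mul]
      exact Nat.mul_le_mul_right _ (F_le_sum_covered ν (by rw [mem_YD.1 hν]; omega))
    have hstep2 : ∑ ν ∈ YD (m + 1), ∑ κ ∈ covered ν, (F κ) * (F ν)
        = ∑ κ ∈ YD m, ∑ ν ∈ covers κ, (F κ) * (F ν) := by
      rw [swap_count (YD (m + 1)) m (fun ν hν => mem_YD.1 hν) (fun κ ν => (F κ) * (F ν))]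
      apply Finset.sum_congr rfl
      intro κ hκ
      rw [YD_filter_covers (mem_YD.1 hκ)]
    have hstep3 : ∑ κ ∈ YD m, ∑ ν ∈ covers κ, (F κ) * (F ν)
        ≤ (m + 1) * ∑ κ ∈ YD m, (F κ) * (F κ) := by
      rw [Finset.mul_sum]
      apply Finset.sum_le_sum
      intro κ hκ
      calc ∑ ν ∈ covers κ, (F κ) * (F ν) = (F κ) * ∑ ν ∈ covers κ, (F ν) :=
            (Finset.mul_sum _ _ _).symm
        _ ≤ (F κ) * ((m + 1) * (F κ)) :=
            Nat.mul_le_mul_left _ (covers_sum_le m κ (mem_YD.1 hκ))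
        _ = (m + 1) * ((F κ) * (F κ)) := by ring
    calc ∑ ν ∈ YD (m + 1), (F ν) * (F ν)
        ≤ ∑ ν ∈ YD (m + 1), ∑ κ ∈ covered ν, (F κ) * (F ν) := hstep1
      _ = ∑ κ ∈ YD m, ∑ ν ∈ covers κ, (F κ) * (F ν) := hstep2
      _ ≤ (m + 1) * ∑ κ ∈ YD m, (F κ) * (F κ) := hstep3
      _ ≤ (m + 1) * m.factorial := Nat.mul_le_mul_left _ ihm
      _ = (m + 1).factorial := (Nat.factorial_succ m).symm

end SYTaux6
open Finset SYTaux SYTaux2 SYTaux3 SYTaux4 SYTaux5 SYTaux6 in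
theorem stmt15 (n m : ℕ) (hm : m ≤ n) :
    (∀ μ : YoungDiagram, μ.cells.card = n → μ.rowLen 0 = n - m →
      ∃ ν : YoungDiagram, ν.cells.card = m ∧ ν.rowLen 0 ≤ n - m ∧
        Nat.card (SYT μ) ≤ n.choose (n - m) * Nat.card (SYT ν)) ∧
    Nat.card {p : Σ μ : YoungDiagram, SYT μ × SYT μ //
        p.1.cells.card = n ∧ p.1.rowLen 0 = n - m} ≤ n.choose m ^ 2 * m.factorial := by
  classical
  have part1 : ∀ μ : YoungDiagram, μ.cells.card = n → μ.rowLen 0 = n - m →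
      Nat.card (SYT μ) ≤ n.choose (n - m) * Nat.card (SYT (rest μ)) := by
    intro μ hcard hrow
    have := part1_bound μ
    rwa [hcard, hrow] at this
  constructor
  · intro μ hcard hrow
    refine ⟨rest μ, ?_, ?_, part1 μ hcard hrow⟩
    · rw [card_rest, hcard, hrow]
      omega
    · rw [rowLen_rest, ← hrow]
      exact μ.rowLen_anti 0 1 (by omega)
  · set C := n.choose (n - m) with hC
    set s := (YD n).filter (fun μ => μ.rowLen 0 = n - m) with hs
    have hmem : ∀ μ : YoungDiagram, μ ∈ s ↔ μ.cells.card = n ∧ μ.rowLen 0 = n - m := by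
      intro μ
      rw [hs, Finset.mem_filter, mem_YD]
    let e : {p : Σ μ : YoungDiagram, SYT μ × SYT μ //
        p.1.cells.card = n ∧ p.1.rowLen 0 = n - m} ≃ Σ μ : ↥s, SYT μ.1 × SYT μ.1 :=
      { toFun := fun p => ⟨⟨p.1.1, (hmem p.1.1).2 p.2⟩, p.1.2⟩
        invFun := fun q => ⟨⟨q.1.1, q.2⟩, (hmem q.1.1).1 q.1.2⟩
        left_inv := by rintro ⟨⟨μ, pq⟩, h⟩; rfl
        right_inv := by rintro ⟨⟨μ, hμ⟩, pq⟩; rfl }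
    have hcount : Nat.card {p : Σ μ : YoungDiagram, SYT μ × SYT μ //
        p.1.cells.card = n ∧ p.1.rowLen 0 = n - m}
        = ∑ μ ∈ s, Nat.card (SYT μ) * Nat.card (SYT μ) := by
      rw [Nat.card_congr e, nat_card_sigma]
      rw [← Finset.sum_coe_sort s (fun μ => Nat.card (SYT μ) * Nat.card (SYT μ))]
      exact Finset.sum_congr rfl (fun μ _ => Nat.card_prod _ _)
    rw [hcount]
    have hb1 : ∑ μ ∈ s, Nat.card (SYT μ) * Nat.card (SYT μ)
        ≤ ∑ μ ∈ s, (C * C) * (Nat.card (SYT (rest μ)) * Nat.card (SYT (rest μ))) := by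
      apply Finset.sum_le_sum
      intro μ hμ
      obtain ⟨hcard, hrow⟩ := (hmem μ).1 hμ
      have h1 := part1 μ hcard hrow
      calc Nat.card (SYT μ) * Nat.card (SYT μ)
          ≤ (C * Nat.card (SYT (rest μ))) * (C * Nat.card (SYT (rest μ))) :=
            Nat.mul_le_mul h1 h1
        _ = (C * C) * (Nat.card (SYT (rest μ)) * Nat.card (SYT (rest μ))) := by ring
    have hb2 : ∑ μ ∈ s, Nat.card (SYT (rest μ)) * Nat.card (SYT (rest μ))
        ≤ m.factorial := by
      have himg : ∑ μ ∈ s, Nat.card (SYT (rest μ)) * Nat.card (SYT (rest μ))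
          = ∑ ν ∈ s.image rest, Nat.card (SYT ν) * Nat.card (SYT ν) := by
        rw [Finset.sum_image]
        intro x hx y hy hxy
        obtain ⟨hxc, hxr⟩ := (hmem x).1 hx
        obtain ⟨hyc, hyr⟩ := (hmem y).1 hy
        exact rest_injective (hxr.trans hyr.symm) hxy
      rw [himg]
      have hsub : s.image rest ⊆ YD m := by
        intro ν hν
        rcases Finset.mem_image.1 hν with ⟨μ, hμ, rfl⟩
        obtain ⟨hcard, hrow⟩ := (hmem μ).1 hμ
        rw [mem_YD, card_rest, hcard, hrow]
        omega
      calc ∑ ν ∈ s.image rest, Nat.card (SYT ν) * Nat.card (SYT ν)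
          ≤ ∑ ν ∈ YD m, Nat.card (SYT ν) * Nat.card (SYT ν) :=
            Finset.sum_le_sum_of_subset hsub
        _ ≤ m.factorial := sum_sq_le m
    calc ∑ μ ∈ s, Nat.card (SYT μ) * Nat.card (SYT μ)
        ≤ ∑ μ ∈ s, (C * C) * (Nat.card (SYT (rest μ)) * Nat.card (SYT (rest μ))) := hb1
      _ = (C * C) * ∑ μ ∈ s, Nat.card (SYT (rest μ)) * Nat.card (SYT (rest μ)) :=
          (Finset.mul_sum _ _ _).symm
      _ ≤ (C * C) * m.factorial := Nat.mul_le_mul_left _ hb2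
      _ = n.choose m ^ 2 * m.factorial := by
          rw [hC, Nat.choose_symm hm, pow_two]
end

section
/- Let X be a real random variable on a finite probability space with distribution Q, let μ_Q = E_Q[X], σ²_Q = Var_Q(X), and let U be another distribution under which X ≥ 0 with E_U[X] = 1. If μ_Q > 2σ_Q ≥ 0, then the total variation distance between Q and U is at least 1 − 4σ²_Q/μ_Q² − 2/μ_Q. -/
theorem stmt17 {Ω : Type*} [Fintype Ω] (Q U X : Ω → ℝ)
    (hQ0 : ∀ x, 0 ≤ Q x) (hQ1 : ∑ x, Q x = 1)
    (hU0 : ∀ x, 0 ≤ U x) (hU1 : ∑ x, U x = 1)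
    (hX0 : ∀ x, 0 ≤ X x) (hEU : ∑ x, U x * X x = 1)
    (μQ σ2 : ℝ) (hμ : μQ = ∑ x, Q x * X x) (hσ : σ2 = ∑ x, Q x * (X x - μQ) ^ 2)
    (hgap : 2 * Real.sqrt σ2 < μQ) :
    1 - 4 * σ2 / μQ ^ 2 - 2 / μQ ≤ ⨆ A : Finset Ω, |∑ x ∈ A, Q x - ∑ x ∈ A, U x| := by
  have hμpos : 0 < μQ := lt_of_le_of_lt (mul_nonneg two_pos.le (Real.sqrt_nonneg _)) hgap
  have hσ2nonneg : 0 ≤ σ2 := by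
    rw [hσ]; exact Finset.sum_nonneg fun x _ => mul_nonneg (hQ0 x) (sq_nonneg _)
  classical
  set A : Finset Ω := Finset.univ.filter (fun x => μQ / 2 ≤ X x) with hA
  -- Chebyshev: Q(Aᶜ) ≤ 4σ2/μQ²
  have hsplit : ∑ x ∈ A, Q x + ∑ x ∈ Finset.univ.filter (fun x => ¬ (μQ / 2 ≤ X x)), Q x = 1 := by
    rw [hA, Finset.sum_filter_add_sum_filter_not, hQ1]
  have hcheb : ∑ x ∈ Finset.univ.filter (fun x => ¬ (μQ / 2 ≤ X x)), Q x ≤ 4 * σ2 / μQ ^ 2 := by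
    have key : (∑ x ∈ Finset.univ.filter (fun x => ¬ (μQ / 2 ≤ X x)), Q x) * (μQ / 2) ^ 2 ≤ σ2 := by
      rw [hσ, Finset.sum_mul]
      refine (Finset.sum_le_sum ?_).trans
        (Finset.sum_le_sum_of_subset_of_nonneg (Finset.filter_subset _ _)
          (fun x _ _ => mul_nonneg (hQ0 x) (by positivity)))
      intro x hx
      simp only [Finset.mem_filter] at hx
      have hlt : X x < μQ / 2 := not_le.mp hx.2
      have h2 : (μQ / 2) ^ 2 ≤ (X x - μQ) ^ 2 := by nlinarith [hX0 x]
      nlinarith [hQ0 x]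
    rw [le_div_iff₀ (by positivity : (0:ℝ) < μQ ^ 2)]
    nlinarith
  -- Markov: U(A) ≤ 2/μQ
  have hmark : ∑ x ∈ A, U x ≤ 2 / μQ := by
    have key : (∑ x ∈ A, U x) * (μQ / 2) ≤ 1 := by
      rw [← hEU, Finset.sum_mul]
      refine (Finset.sum_le_sum ?_).trans
        (Finset.sum_le_sum_of_subset_of_nonneg (Finset.subset_univ A)
          (fun x _ _ => mul_nonneg (hU0 x) (hX0 x)))
      intro x hx
      simp only [hA, Finset.mem_filter] at hx
      exact mul_le_mul_of_nonneg_left hx.2 (hU0 x)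
    rw [le_div_iff₀ hμpos]
    nlinarith
  have hbound : 1 - 4 * σ2 / μQ ^ 2 - 2 / μQ ≤ |∑ x ∈ A, Q x - ∑ x ∈ A, U x| := by
    have : 1 - 4 * σ2 / μQ ^ 2 - 2 / μQ ≤ ∑ x ∈ A, Q x - ∑ x ∈ A, U x := by linarith
    exact this.trans (le_abs_self _)
  exact hbound.trans (le_ciSup (f := fun A : Finset Ω => |∑ x ∈ A, Q x - ∑ x ∈ A, U x|) (Set.Finite.bddAbove (Set.finite_range _)) A)
end
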